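/- Uniqueness for the punctured Dirichlet problem: let D ⊂ Z^d be a finite connected domain, z ∈ D, and let λ_1 be the principal eigenvalue of H = (Δσ^{-1}+ξ)1_D. Then λ_1 is not an eigenvalue of the punctured operator (Δσ^{-1}+ξ)1_{D∖{z}}; consequently the Dirichlet problem (Δσ^{-1} + ξ − λ_1) v = 0 on D∖{z}, v = 1_{{z}} outside D∖{z}, has at most one solution. -/

import Mathlib

open scoped BigOperators

/-- Sites of the lattice `ℤ^d`. -/
abbrev Site (d : ℕ) := Fin d → ℤ

/-- ℓ¹ (graph) distance on `ℤ^d`. -/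
def dist1 {d : ℕ} (x y : Site d) : ℤ := ∑ i : Fin d, |x i - y i|

/-- The discrete Laplacian `(Δf)(z) = (2d)⁻¹ ∑_{|y−z|=1} f(y) − f(z)`. -/
noncomputable def lap {d : ℕ} (f : Site d → ℝ) (z : Site d) : ℝ :=
  (2 * (d : ℝ))⁻¹ * ∑ i : Fin d, (f (z + Pi.single i 1) + f (z - Pi.single i 1)) - f z

/-- The Hamiltonian `H = (Δ σ⁻¹ + ξ) 1_D` with Dirichlet boundary conditions. -/
noncomputable def ham {d : ℕ} (D : Finset (Site d)) (σ ξ : Site d → ℝ)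
    (f : Site d → ℝ) (z : Site d) : ℝ :=
  if z ∈ D then lap (fun y => (σ y)⁻¹ * f y) z + ξ z * f z else 0

/-- `lam` is an eigenvalue of `H = (Δ σ⁻¹ + ξ) 1_D`. -/
def IsEigen {d : ℕ} (D : Finset (Site d)) (σ ξ : Site d → ℝ) (lam : ℝ) : Prop :=
  ∃ f : Site d → ℝ, f ≠ 0 ∧ (∀ z, z ∉ D → f z = 0) ∧ ∀ z, ham D σ ξ f z = lam * f z

/-- `D` is connected in the nearest-neighbour graph of `ℤ^d`. -/
def ConnIn {d : ℕ} (D : Finset (Site d)) : Prop :=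
  ∀ x ∈ D, ∀ y ∈ D, ∃ (k : ℕ) (p : Fin (k + 1) → Site d),
    p 0 = x ∧ p (Fin.last k) = y ∧ (∀ i, p i ∈ D) ∧
    ∀ i : Fin k, dist1 (p i.castSucc) (p i.succ) = 1

/-!
Symmetry and a Perron–Frobenius argument. The operator `H = (Δσ⁻¹ + ξ)1_D` is symmetric for the
weight `σ⁻¹`, so after the substitution `f = √σ h` its top eigenvalue `r` is the maximum of a
Rayleigh quotient. Kato's inequality `f Δf ≤ |f| Δ|f|` shows the maximiser may be taken
nonnegative, and the strong minimum principle on the connected set `D` makes it a strictly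
positive eigenfunction `φ`. Pairing `φ` with `|f|`, which satisfies `H|f| ≥ μ|f|` whenever
`Hf = μf`, gives `μ ≤ r`, so `r = λ₁`. A `λ₁`-eigenfunction `g` of the punctured operator vanishes
at `z`, and `|g|` satisfies `H|g| ≥ λ₁|g|` on all of `D`; pairing with `φ` turns this into an
equality, so `|g|` is a nonnegative eigenfunction vanishing at `z`, hence zero. Uniqueness for the
Dirichlet problem follows by taking differences.
-/

open Finset

section Development

variable {d : ℕ}

lemma exists_eq_add_or_eq_sub_of_dist1 {x y : Site d} (h : dist1 x y = 1) :
    ∃ i : Fin d, y = x + Pi.single i 1 ∨ y = x - Pi.single i 1 := by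
  obtain ⟨i, -, hi⟩ : ∃ i ∈ univ, |x i - y i| ≠ 0 := by
    by_contra! h0
    simp [dist1, sum_eq_zero h0] at h
  have hsplit : |x i - y i| + ∑ j ∈ univ.erase i, |x j - y j| = ∑ j, |x j - y j| :=
    add_sum_erase univ (fun j => |x j - y j|) (mem_univ i)
  have hle := Int.one_le_abs (abs_ne_zero.mp hi)
  have hrest_nonneg := sum_nonneg fun j (_ : j ∈ univ.erase i) => abs_nonneg (x j - y j)
  simp only [dist1] at h
  have hxi : |x i - y i| = 1 := by linarith
  have hrest : ∀ j ∈ univ.erase i, |x j - y j| = 0 :=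
    (sum_eq_zero_iff_of_nonneg fun j _ => abs_nonneg _).mp (by linarith)
  refine ⟨i, ?_⟩
  have hj : ∀ j ≠ i, y j = x j := fun j hj => by
    linarith [abs_eq_zero.mp (hrest j (mem_erase.2 ⟨hj, mem_univ j⟩))]
  have hy : y = x - Pi.single i (x i - y i) := by
    funext j
    rcases eq_or_ne j i with rfl | hji
    · simp
    · simp [Pi.single_eq_of_ne hji, hj j hji]
  rcases abs_eq zero_le_one |>.mp hxi with h' | h'
  · exact Or.inr (by rwa [h'] at hy)
  · exact Or.inl (by rw [hy, h', Pi.single_neg, sub_neg_eq_add])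

theorem ConnIn.forall_of_forall_dist1 {D : Finset (Site d)} (hConn : ConnIn D)
    {P : Site d → Prop} (hstep : ∀ x ∈ D, ∀ y ∈ D, dist1 x y = 1 → P x → P y)
    {x₀ : Site d} (hx₀ : x₀ ∈ D) (h₀ : P x₀) : ∀ x ∈ D, P x := by
  intro x hx
  obtain ⟨k, p, rfl, rfl, hpD, hadj⟩ := hConn x₀ hx₀ x hx
  exact Fin.induction (motive := fun j => P (p j)) h₀
    (fun i ih => hstep _ (hpD _) _ (hpD _) (hadj i) ih) (Fin.last k)

section Laplacian

variable {u w : Site d → ℝ} {x : Site d}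

lemma lap_add_self (u : Site d → ℝ) (x : Site d) :
    lap u x + u x = (2 * (d : ℝ))⁻¹ * ∑ i, (u (x + Pi.single i 1) + u (x - Pi.single i 1)) := by
  rw [lap]; ring

lemma abs_lap_add_self_le (u : Site d → ℝ) (x : Site d) :
    |lap u x + u x| ≤ lap |u| x + |u x| := by
  have h := lap_add_self |u| x
  simp only [Pi.abs_apply] at h
  rw [lap_add_self, h, abs_mul, abs_of_nonneg (by positivity)]
  gcongr
  refine (abs_sum_le_sum_abs _ _).trans (sum_le_sum fun i _ => abs_add_le _ _)

lemma mul_abs_le_lap_abs {c : ℝ} (h : lap u x = c * u x) : c * |u x| ≤ lap |u| x := by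
  have := abs_lap_add_self_le u x
  rw [h, ← add_one_mul, abs_mul] at this
  nlinarith [le_abs_self (c + 1), abs_nonneg (u x)]

lemma mul_lap_le_abs_mul_lap_abs (u : Site d → ℝ) (x : Site d) :
    u x * lap u x ≤ |u x| * lap |u| x := by
  have h₁ := abs_lap_add_self_le u x
  have h₂ : u x * (lap u x + u x) ≤ |u x| * |lap u x + u x| := by
    rw [← abs_mul]; exact le_abs_self _
  have h₃ : u x * u x = |u x| * |u x| := (abs_mul_abs_self _).symm
  nlinarith [abs_nonneg (u x)]

lemma lap_nonneg_of_eq_zero (hu : ∀ y, 0 ≤ u y) (hx : u x = 0) : 0 ≤ lap u x := by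
  have := lap_add_self u x
  rw [hx, add_zero] at this
  rw [this]
  exact mul_nonneg (by positivity) (sum_nonneg fun i _ => add_nonneg (hu _) (hu _))

lemma eq_zero_of_lap_nonpos {y : Site d} (hu : ∀ y, 0 ≤ u y) (hx : u x = 0) (hlap : lap u x ≤ 0)
    (hxy : dist1 x y = 1) : u y = 0 := by
  obtain ⟨i, hy⟩ := exists_eq_add_or_eq_sub_of_dist1 hxy
  have hd : (0 : ℝ) < 2 * d := by have := i.pos; positivity
  have hsum : ∑ j, (u (x + Pi.single j 1) + u (x - Pi.single j 1)) = 0 := by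
    have := lap_add_self u x
    rw [hx, add_zero] at this
    refine (mul_eq_zero.mp ?_).resolve_left (inv_ne_zero hd.ne')
    linarith [lap_nonneg_of_eq_zero hu hx]
  have hi := (sum_eq_zero_iff_of_nonneg fun j _ =>
    add_nonneg (hu (x + Pi.single j 1)) (hu (x - Pi.single j 1))).mp hsum i (mem_univ i)
  have h₁ := hu (x + Pi.single i 1)
  have h₂ := hu (x - Pi.single i 1)
  rcases hy with rfl | rfl <;> linarith

lemma sum_mul_shift {D : Finset (Site d)} (hu : ∀ x ∉ D, u x = 0) (hw : ∀ x ∉ D, w x = 0)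
    (e : Site d) : ∑ x ∈ D, w x * u (x + e) = ∑ x ∈ D, u x * w (x - e) := by
  rw [← finsum_eq_sum_of_support_subset _ fun x hx => ?_,
    ← finsum_eq_sum_of_support_subset _ fun x hx => ?_]
  · rw [← finsum_comp_equiv (Equiv.subRight e)]
    simp [mul_comm]
  · by_contra h; exact hx (by simp [hu x h])
  · by_contra h; exact hx (by simp [hw x h])

lemma sum_mul_lap_comm {D : Finset (Site d)} (hu : ∀ x ∉ D, u x = 0) (hw : ∀ x ∉ D, w x = 0) :
    ∑ x ∈ D, w x * lap u x = ∑ x ∈ D, u x * lap w x := by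
  have hshift (i : Fin d) : ∑ x ∈ D, w x * (u (x + Pi.single i 1) + u (x - Pi.single i 1))
      = ∑ x ∈ D, u x * (w (x + Pi.single i 1) + w (x - Pi.single i 1)) := by
    simp only [mul_add, sum_add_distrib, sub_eq_add_neg, sum_mul_shift hu hw, neg_neg]
    ring
  simp only [lap, mul_sub, mul_sum, sum_sub_distrib]
  rw [sum_comm, sum_comm (s := D)]
  simp only [← mul_sum, mul_left_comm (w _), mul_left_comm (u _), hshift, mul_comm (u _)]

end Laplacian

section Hamiltonian

variable {D : Finset (Site d)} {σ ξ f g : Site d → ℝ} {x : Site d}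

lemma ham_of_mem (hx : x ∈ D) : ham D σ ξ f x = lap (σ⁻¹ * f) x + ξ x * f x := if_pos hx

lemma ham_of_notMem (hx : x ∉ D) : ham D σ ξ f x = 0 := if_neg hx

variable (D σ ξ) in
noncomputable def hamₗ : (Site d → ℝ) →ₗ[ℝ] Site d → ℝ where
  toFun := ham D σ ξ
  map_add' f g := by
    funext x
    by_cases hx : x ∈ D
    · simp only [Pi.add_apply, ham_of_mem hx, lap, mul_add, sum_add_distrib]
      ring
    · simp [ham_of_notMem hx]
  map_smul' c f := by
    funext x
    by_cases hx : x ∈ D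
    · simp only [Pi.smul_apply, smul_eq_mul, RingHom.id_apply, ham_of_mem hx, lap, Pi.mul_apply,
        mul_left_comm _ c, ← mul_add, ← mul_sum]
      ring
    · simp [ham_of_notMem hx]

lemma ham_add : ham D σ ξ (f + g) = ham D σ ξ f + ham D σ ξ g := (hamₗ D σ ξ).map_add f g

lemma ham_sub : ham D σ ξ (f - g) = ham D σ ξ f - ham D σ ξ g := (hamₗ D σ ξ).map_sub f g

lemma ham_smul (c : ℝ) : ham D σ ξ (c • f) = c • ham D σ ξ f := (hamₗ D σ ξ).map_smul c f

lemma inv_mul_abs (hσ : ∀ y, 0 ≤ σ y) : σ⁻¹ * |f| = |σ⁻¹ * f| := by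
  funext y
  simp [abs_mul, abs_of_nonneg (hσ y)]

lemma sum_inv_mul_mul_ham_comm (hf : ∀ x ∉ D, f x = 0) (hg : ∀ x ∉ D, g x = 0) :
    ∑ x ∈ D, (σ x)⁻¹ * g x * ham D σ ξ f x = ∑ x ∈ D, (σ x)⁻¹ * f x * ham D σ ξ g x := by
  have hsplit (f g : Site d → ℝ) : ∑ x ∈ D, (σ x)⁻¹ * g x * ham D σ ξ f x
      = ∑ x ∈ D, (σ⁻¹ * g) x * lap (σ⁻¹ * f) x + ∑ x ∈ D, ξ x * (σ x)⁻¹ * f x * g x := by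
    rw [← sum_add_distrib]
    refine sum_congr rfl fun x hx => ?_
    rw [ham_of_mem hx, Pi.mul_apply, Pi.inv_apply]
    ring
  have hsupp {f : Site d → ℝ} (hf : ∀ x ∉ D, f x = 0) : ∀ x ∉ D, (σ⁻¹ * f) x = 0 :=
    fun x hx => by simp [hf x hx]
  rw [hsplit, hsplit, sum_mul_lap_comm (hsupp hf) (hsupp hg)]
  congr 1
  exact sum_congr rfl fun x _ => by ring

lemma sum_inv_mul_mul_ham_sub {φ : Site d → ℝ} {r : ℝ} (hφ : ∀ x ∉ D, φ x = 0)
    (hφr : ∀ x, ham D σ ξ φ x = r * φ x) (hg : ∀ x ∉ D, g x = 0) (μ : ℝ) :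
    ∑ x ∈ D, (σ x)⁻¹ * φ x * (ham D σ ξ g x - μ * g x)
      = (r - μ) * ∑ x ∈ D, (σ x)⁻¹ * φ x * g x := by
  simp only [mul_sub, sum_sub_distrib, sum_inv_mul_mul_ham_comm hg hφ, hφr, sub_mul, mul_sum]
  congr 1 <;> exact sum_congr rfl fun x _ => by ring

lemma inv_mul_mul_ham_le_abs (hσ : ∀ y, 0 ≤ σ y) :
    (σ x)⁻¹ * f x * ham D σ ξ f x ≤ (σ x)⁻¹ * |f x| * ham D σ ξ |f| x := by
  by_cases hx : x ∈ D
  · rw [ham_of_mem hx, ham_of_mem hx, inv_mul_abs hσ, Pi.abs_apply]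
    have := mul_lap_le_abs_mul_lap_abs (σ⁻¹ * f) x
    simp only [Pi.mul_apply, Pi.inv_apply, abs_mul, abs_of_nonneg (inv_nonneg.2 (hσ x))] at this
    have hsq : |f x| * |f x| = f x * f x := abs_mul_abs_self _
    linear_combination this - (ξ x * (σ x)⁻¹) * hsq
  · simp [ham_of_notMem hx]

lemma mul_abs_le_ham_abs (hσ : ∀ y, 0 < σ y) {μ : ℝ} (hx : x ∈ D)
    (h : lap (σ⁻¹ * g) x + ξ x * g x = μ * g x) : μ * |g x| ≤ ham D σ ξ |g| x := by
  have hσx := hσ x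
  have hlap : lap (σ⁻¹ * g) x = ((μ - ξ x) * σ x) * (σ⁻¹ * g) x := by
    rw [Pi.mul_apply, Pi.inv_apply]
    field_simp
    linarith
  have hkato := mul_abs_le_lap_abs hlap
  rw [Pi.mul_apply, Pi.inv_apply, abs_mul, abs_of_pos (inv_pos.2 hσx)] at hkato
  field_simp at hkato
  rw [ham_of_mem hx, inv_mul_abs fun y => (hσ y).le, Pi.abs_apply]
  linarith

lemma ham_abs_nonneg_of_eq_zero (hσ : ∀ y, 0 ≤ σ y) (hx : g x = 0) : 0 ≤ ham D σ ξ |g| x := by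
  by_cases hxD : x ∈ D
  · rw [ham_of_mem hxD, Pi.abs_apply, hx, abs_zero, mul_zero, add_zero]
    exact lap_nonneg_of_eq_zero (fun y => mul_nonneg (inv_nonneg.2 (hσ y)) (abs_nonneg _))
      (by simp [hx])
  · rw [ham_of_notMem hxD]

lemma ConnIn.eq_zero_of_ham_eq (hConn : ConnIn D) (hσ : ∀ y, 0 < σ y) {μ : ℝ}
    (hg : ∀ y, 0 ≤ g y) (hgμ : ∀ x ∈ D, ham D σ ξ g x = μ * g x) {y : Site d} (hy : y ∈ D)
    (hgy : g y = 0) : ∀ x ∈ D, g x = 0 := by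
  refine hConn.forall_of_forall_dist1 (fun x hx x' _ hxx' hgx => ?_) hy hgy
  have hu : ∀ y, 0 ≤ (σ⁻¹ * g) y := fun y => mul_nonneg (inv_nonneg.2 (hσ y).le) (hg y)
  have hlap : lap (σ⁻¹ * g) x ≤ 0 := by
    have := hgμ x hx
    rw [ham_of_mem hx, hgx] at this
    linarith
  have := eq_zero_of_lap_nonpos hu (by simp [hgx]) hlap hxx'
  simpa [(hσ x').ne'] using this

end Hamiltonian

section Perron

open scoped RealInnerProductSpace

variable (D : Finset (Site d)) (σ ξ : Site d → ℝ)

/-- The substitution `f = √σ h` conjugates `ham`, symmetric for the weight `σ⁻¹`, to the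
operator `symmHam` that is symmetric on `ℓ²(D)`. -/
noncomputable def sqrtExtend : EuclideanSpace ℝ D →ₗ[ℝ] Site d → ℝ where
  toFun h x := if hx : x ∈ D then √(σ x) * h ⟨x, hx⟩ else 0
  map_add' h k := by
    funext x
    split_ifs <;> simp [mul_add, *]
  map_smul' c h := by
    funext x
    split_ifs <;> simp [mul_left_comm, *]

noncomputable def symmHam : EuclideanSpace ℝ D →ₗ[ℝ] EuclideanSpace ℝ D where
  toFun h := WithLp.toLp 2 fun x => (√(σ x))⁻¹ * ham D σ ξ (sqrtExtend D σ h) x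
  map_add' h k := by
    ext x
    simp [ham_add, mul_add]
  map_smul' c h := by
    ext x
    simp [ham_smul, mul_left_comm]

variable {D σ}

lemma sqrtExtend_of_mem (h : EuclideanSpace ℝ D) {x : Site d} (hx : x ∈ D) :
    sqrtExtend D σ h x = √(σ x) * h ⟨x, hx⟩ :=
  dif_pos hx

lemma sqrtExtend_of_notMem (h : EuclideanSpace ℝ D) {x : Site d} (hx : x ∉ D) :
    sqrtExtend D σ h x = 0 :=
  dif_neg hx

lemma sqrtExtend_abs (h : EuclideanSpace ℝ D) :
    sqrtExtend D σ (WithLp.toLp 2 fun x => |h x|) = |sqrtExtend D σ h| := by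
  funext x
  by_cases hx : x ∈ D
  · simp [sqrtExtend_of_mem _ hx, abs_mul, abs_of_nonneg (Real.sqrt_nonneg _)]
  · simp [sqrtExtend_of_notMem _ hx]

lemma inner_symmHam (h k : EuclideanSpace ℝ D) :
    ⟪symmHam D σ ξ h, k⟫ =
      ∑ x ∈ D, (σ x)⁻¹ * sqrtExtend D σ k x * ham D σ ξ (sqrtExtend D σ h) x := by
  rw [PiLp.inner_apply, ← sum_coe_sort D]
  refine sum_congr rfl fun x _ => ?_
  have hσx : (σ x)⁻¹ * √(σ x) = (√(σ x))⁻¹ := by rw [← Real.sqrt_div_self, div_eq_inv_mul]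
  simp only [symmHam, LinearMap.coe_mk, AddHom.coe_mk, Real.inner_apply, sqrtExtend_of_mem k x.2]
  rw [← mul_assoc, hσx]
  ring

lemma symmHam_isSymmetric : (symmHam D σ ξ).IsSymmetric := fun h k => by
  rw [inner_symmHam ξ, real_inner_comm, inner_symmHam ξ]
  exact sum_inv_mul_mul_ham_comm (fun x hx => sqrtExtend_of_notMem h hx)
    (fun x hx => sqrtExtend_of_notMem k hx)

lemma inner_symmHam_le_abs (hσ : ∀ y, 0 ≤ σ y) (h : EuclideanSpace ℝ D) :
    ⟪symmHam D σ ξ h, h⟫ ≤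
      ⟪symmHam D σ ξ (WithLp.toLp 2 fun x => |h x|), WithLp.toLp 2 fun x => |h x|⟫ := by
  rw [inner_symmHam ξ, inner_symmHam ξ, sqrtExtend_abs]
  exact sum_le_sum fun x _ => inv_mul_mul_ham_le_abs hσ

lemma exists_nonneg_hasEigenvector (hσ : ∀ y, 0 ≤ σ y) (hD : D.Nonempty) :
    ∃ (r : ℝ) (h : EuclideanSpace ℝ D), h ≠ 0 ∧ (∀ x, 0 ≤ h x) ∧ symmHam D σ ξ h = r • h := by
  have : Nonempty D := hD.to_subtype
  set T := (symmHam D σ ξ).toContinuousLinearMap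
  have hT : IsSelfAdjoint T :=
    ContinuousLinearMap.isSelfAdjoint_iff_isSymmetric.2 (symmHam_isSymmetric ξ)
  obtain ⟨h₀, hh₀, hmax⟩ := (isCompact_sphere (0 : EuclideanSpace ℝ D) 1).exists_isMaxOn
    (NormedSpace.sphere_nonempty.2 zero_le_one) T.reApplyInnerSelf_continuous.continuousOn
  set h : EuclideanSpace ℝ D := WithLp.toLp 2 fun x => |h₀ x|
  have hnorm : ‖h‖ = 1 := by
    rw [mem_sphere_zero_iff_norm] at hh₀
    simpa [h, EuclideanSpace.norm_eq] using hh₀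
  have hne : h ≠ 0 := by
    rintro hh
    simp [hh] at hnorm
  have hhmax : IsMaxOn T.reApplyInnerSelf (Metric.sphere 0 ‖h‖) h := fun y hy =>
    (hmax (by rwa [hnorm] at hy)).trans (inner_symmHam_le_abs ξ hσ h₀)
  exact ⟨_, h, hne, fun x => abs_nonneg _, (hT.hasEigenvector_of_isMaxOn hne hhmax).apply_eq_smul⟩

lemma ham_sqrtExtend_of_eq_smul (hσ : ∀ y, 0 < σ y) {r : ℝ} {h : EuclideanSpace ℝ D}
    (hr : symmHam D σ ξ h = r • h) (x : Site d) :
    ham D σ ξ (sqrtExtend D σ h) x = r * sqrtExtend D σ h x := by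
  by_cases hx : x ∈ D
  · have hx' := congrArg (fun k : EuclideanSpace ℝ D => k ⟨x, hx⟩) hr
    simp only [symmHam, LinearMap.coe_mk, AddHom.coe_mk, PiLp.smul_apply, smul_eq_mul] at hx'
    rw [sqrtExtend_of_mem h hx, mul_left_comm, ← hx',
      mul_inv_cancel_left₀ (Real.sqrt_pos.2 (hσ x)).ne']
  · rw [ham_of_notMem hx, sqrtExtend_of_notMem h hx, mul_zero]

end Perron

structure IsPosEigenfunction (D : Finset (Site d)) (σ ξ : Site d → ℝ) (r : ℝ) (φ : Site d → ℝ) :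
    Prop where
  eq_zero_of_notMem : ∀ x ∉ D, φ x = 0
  pos : ∀ x ∈ D, 0 < φ x
  ham_eq : ∀ x, ham D σ ξ φ x = r * φ x

lemma IsPosEigenfunction.isEigen {D : Finset (Site d)} {σ ξ φ : Site d → ℝ} {r : ℝ}
    (hφ : IsPosEigenfunction D σ ξ r φ) {x : Site d} (hx : x ∈ D) : IsEigen D σ ξ r :=
  ⟨φ, fun h => (hφ.pos x hx).ne' (congrFun h x), hφ.eq_zero_of_notMem, hφ.ham_eq⟩

lemma exists_isPosEigenfunction {D : Finset (Site d)} {σ : Site d → ℝ} (ξ : Site d → ℝ)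
    (hConn : ConnIn D) (hσ : ∀ y, 0 < σ y) (hD : D.Nonempty) :
    ∃ r φ, IsPosEigenfunction D σ ξ r φ := by
  obtain ⟨r, h, hne, hnn, hr⟩ := exists_nonneg_hasEigenvector ξ (fun y => (hσ y).le) hD
  obtain ⟨x₀, hx₀⟩ : ∃ x, h x ≠ 0 := by
    by_contra! h0
    exact hne (by ext x; simp [h0])
  have hφnn (x : Site d) : 0 ≤ sqrtExtend D σ h x := by
    by_cases hx : x ∈ D
    · rw [sqrtExtend_of_mem h hx]; exact mul_nonneg (Real.sqrt_nonneg _) (hnn _)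
    · rw [sqrtExtend_of_notMem h hx]
  have hφr := ham_sqrtExtend_of_eq_smul ξ hσ hr
  refine ⟨r, _, ⟨fun x hx => sqrtExtend_of_notMem h hx,
    fun x hx => (hφnn x).lt_of_ne' fun hx0 => ?_, hφr⟩⟩
  have := hConn.eq_zero_of_ham_eq hσ hφnn (fun x _ => hφr x) hx hx0 x₀ x₀.2
  simp [sqrtExtend_of_mem h x₀.2, hx₀, (Real.sqrt_pos.2 (hσ x₀)).ne'] at this

section PrincipalEigenvalue

variable {D : Finset (Site d)} {σ ξ φ g : Site d → ℝ} {r : ℝ}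

lemma IsPosEigenfunction.inv_mul_pos (hφ : IsPosEigenfunction D σ ξ r φ) (hσ : ∀ y, 0 < σ y)
    {x : Site d} (hx : x ∈ D) : 0 < (σ x)⁻¹ * φ x :=
  mul_pos (inv_pos.2 (hσ x)) (hφ.pos x hx)

lemma IsPosEigenfunction.le_of_isEigen (hφ : IsPosEigenfunction D σ ξ r φ)
    (hσ : ∀ y, 0 < σ y) {μ : ℝ} (hμ : IsEigen D σ ξ μ) : μ ≤ r := by
  obtain ⟨f, hf0, hfD, hfμ⟩ := hμ
  obtain ⟨x₀, hx₀⟩ := Function.ne_iff.mp hf0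
  have hx₀D : x₀ ∈ D := by
    by_contra h
    exact hx₀ (hfD x₀ h)
  have hsub : 0 ≤ ∑ x ∈ D, (σ x)⁻¹ * φ x * (ham D σ ξ |f| x - μ * |f| x) :=
    sum_nonneg fun x hx => mul_nonneg (hφ.inv_mul_pos hσ hx).le <| sub_nonneg.2 <|
      mul_abs_le_ham_abs hσ hx (by rw [← ham_of_mem hx]; exact hfμ x)
  have hpos : 0 < ∑ x ∈ D, (σ x)⁻¹ * φ x * |f| x :=
    sum_pos' (fun x hx => mul_nonneg (hφ.inv_mul_pos hσ hx).le (abs_nonneg _))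
      ⟨x₀, hx₀D, mul_pos (hφ.inv_mul_pos hσ hx₀D) (abs_pos.2 hx₀)⟩
  rw [sum_inv_mul_mul_ham_sub hφ.eq_zero_of_notMem hφ.ham_eq
    (fun x hx => by simp [hfD x hx]) μ] at hsub
  exact sub_nonneg.1 ((mul_nonneg_iff_of_pos_right hpos).1 hsub)

lemma IsPosEigenfunction.ham_eq_of_le (hφ : IsPosEigenfunction D σ ξ r φ)
    (hσ : ∀ y, 0 < σ y) (hg : ∀ x ∉ D, g x = 0) (hgr : ∀ x ∈ D, r * g x ≤ ham D σ ξ g x) :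
    ∀ x ∈ D, ham D σ ξ g x = r * g x := by
  have hsum : ∑ x ∈ D, (σ x)⁻¹ * φ x * (ham D σ ξ g x - r * g x) = 0 := by
    rw [sum_inv_mul_mul_ham_sub hφ.eq_zero_of_notMem hφ.ham_eq hg r, sub_self, zero_mul]
  intro x hx
  have := (sum_eq_zero_iff_of_nonneg fun x hx => mul_nonneg (hφ.inv_mul_pos hσ hx).le
    (sub_nonneg.2 (hgr x hx))).1 hsum x hx
  exact sub_eq_zero.1 ((mul_eq_zero.1 this).resolve_left (hφ.inv_mul_pos hσ hx).ne')

lemma IsPosEigenfunction.not_isEigen_erase (hφ : IsPosEigenfunction D σ ξ r φ)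
    (hConn : ConnIn D) (hσ : ∀ y, 0 < σ y) {z : Site d} (hz : z ∈ D) :
    ¬ IsEigen (D.erase z) σ ξ r := by
  rintro ⟨g, hg0, hgE, hgr⟩
  have hgz : g z = 0 := hgE z (D.notMem_erase z)
  have hgD : ∀ x ∉ D, |g| x = 0 := fun x hx => by
    simp [hgE x fun h => hx (mem_of_mem_erase h)]
  have hsub : ∀ x ∈ D, r * |g| x ≤ ham D σ ξ |g| x := by
    intro x hx
    rcases eq_or_ne x z with rfl | hxz
    · simpa [hgz] using ham_abs_nonneg_of_eq_zero (fun y => (hσ y).le) hgz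
    · have hxE := mem_erase.2 ⟨hxz, hx⟩
      exact mul_abs_le_ham_abs hσ hx (by rw [← ham_of_mem hxE]; exact hgr x)
  have h0 := hConn.eq_zero_of_ham_eq hσ (fun y => abs_nonneg (g y))
    (hφ.ham_eq_of_le hσ hgD hsub) hz (by simp [hgz])
  refine hg0 (funext fun x => ?_)
  by_cases hx : x ∈ D
  · simpa using h0 x hx
  · simpa using hgD x hx

lemma eq_of_not_isEigen {E : Finset (Site d)} {μ : ℝ} (hμ : ¬ IsEigen E σ ξ μ)
    {v w : Site d → ℝ} (hv : ∀ y ∈ E, ham E σ ξ v y = μ * v y)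
    (hw : ∀ y ∈ E, ham E σ ξ w y = μ * w y) (hvw : ∀ y ∉ E, v y = w y) : v = w := by
  by_contra hne
  refine hμ ⟨v - w, sub_ne_zero.2 hne, fun y hy => sub_eq_zero.2 (hvw y hy), fun y => ?_⟩
  by_cases hy : y ∈ E
  · rw [ham_sub, Pi.sub_apply, Pi.sub_apply, hv y hy, hw y hy, mul_sub]
  · rw [ham_of_notMem hy, Pi.sub_apply, hvw y hy, sub_self, mul_zero]

end PrincipalEigenvalue

end Development

theorem punctured_dirichlet_uniqueness_general {d : ℕ}
    (D : Finset (Site d)) (hConn : ConnIn D) (z : Site d) (hz : z ∈ D)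
    (σ ξ : Site d → ℝ) (hσ : ∀ y, 0 < σ y) (lam1 : ℝ)
    (h1 : IsEigen D σ ξ lam1) (h2 : ∀ mu, IsEigen D σ ξ mu → mu ≤ lam1) :
    ¬ IsEigen (D.erase z) σ ξ lam1 ∧
    ∀ v w : Site d → ℝ,
      ((∀ y ∈ D.erase z,
          lap (fun x => (σ x)⁻¹ * v x) y + ξ y * v y - lam1 * v y = 0) ∧
        (∀ y, y ∉ D.erase z → v y = if y = z then 1 else 0)) →
      ((∀ y ∈ D.erase z,
          lap (fun x => (σ x)⁻¹ * w x) y + ξ y * w y - lam1 * w y = 0) ∧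
        (∀ y, y ∉ D.erase z → w y = if y = z then 1 else 0)) →
      v = w := by
  obtain ⟨r, φ, hφ⟩ := exists_isPosEigenfunction ξ hConn hσ ⟨z, hz⟩
  obtain rfl : lam1 = r := le_antisymm (hφ.le_of_isEigen hσ h1) (h2 r (hφ.isEigen hz))
  have hpunct := hφ.not_isEigen_erase hConn hσ hz
  refine ⟨hpunct, fun v w hv hw => eq_of_not_isEigen hpunct (fun y hy => ?_) (fun y hy => ?_)
    fun y hy => by rw [hv.2 y hy, hw.2 y hy]⟩
  · rw [ham_of_mem hy]
    exact sub_eq_zero.1 (hv.1 y hy)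
  · rw [ham_of_mem hy]
    exact sub_eq_zero.1 (hw.1 y hy)

/-- Uniqueness for the punctured Dirichlet problem: if `λ₁` is the principal
eigenvalue of `H = (Δσ⁻¹+ξ)1_D` on a finite connected `D` and `z ∈ D`, then `λ₁` is not an
eigenvalue of the punctured operator `(Δσ⁻¹+ξ)1_{D∖{z}}`; consequently the Dirichlet problem
`(Δσ⁻¹ + ξ − λ₁)v = 0` on `D∖{z}`, `v = 1_{{z}}` outside `D∖{z}`, has at most one solution. -/
theorem punctured_dirichlet_uniqueness {d : ℕ} (hd : 0 < d)
    (D : Finset (Site d)) (hConn : ConnIn D) (z : Site d) (hz : z ∈ D)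
    (σ ξ : Site d → ℝ) (hσ : ∀ y, 0 < σ y) (lam1 : ℝ)
    (h1 : IsEigen D σ ξ lam1) (h2 : ∀ mu, IsEigen D σ ξ mu → mu ≤ lam1) :
    ¬ IsEigen (D.erase z) σ ξ lam1 ∧
    ∀ v w : Site d → ℝ,
      ((∀ y ∈ D.erase z,
          lap (fun x => (σ x)⁻¹ * v x) y + ξ y * v y - lam1 * v y = 0) ∧
        (∀ y, y ∉ D.erase z → v y = if y = z then 1 else 0)) →
      ((∀ y ∈ D.erase z,
          lap (fun x => (σ x)⁻¹ * w x) y + ξ y * w y - lam1 * w y = 0) ∧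
        (∀ y, y ∉ D.erase z → w y = if y = z then 1 else 0)) →
      v = w :=
  punctured_dirichlet_uniqueness_general D hConn z hz σ ξ hσ lam1 h1 h2
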